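/- arXiv:1208.6061 — 4 statements merged into one kernel-verified Lean document; each statement's English description precedes it below -/
import Mathlib

section
/- Let A be an associative ℚ-algebra, V, ζ ∈ A, and suppose μ := −(1/2)[ζ,[V,ζ]] commutes with ζ. Then for every natural number k ≥ 0, [V, ζ^k] = k ζ^{k−1} [V,ζ] + k(k−1) ζ^{k−2} μ, with the convention that the terms vanish when k = 0 or k = 1 respectively. -/
/-- In an associative ℚ-algebra, if `μ := −(1/2)[ζ,[V,ζ]]` commutes with `ζ`,
then for every `k ≥ 0`,
`[V, ζ^k] = k ζ^(k−1) [V,ζ] + k(k−1) ζ^(k−2) μ`. -/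
theorem stmt5 {A : Type*} [Ring A] [Algebra ℚ A] (V ζ μ : A)
    (hμ : μ = -((1 : ℚ) / 2) •
      (ζ * (V * ζ - ζ * V) - (V * ζ - ζ * V) * ζ))
    (hcomm : μ * ζ = ζ * μ) :
    ∀ k : ℕ,
      V * ζ ^ k - ζ ^ k * V =
        k • (ζ ^ (k - 1) * (V * ζ - ζ * V)) + (k * (k - 1)) • (ζ ^ (k - 2) * μ) := by
  have h2 : (V * ζ - ζ * V) * ζ = ζ * (V * ζ - ζ * V) + μ + μ := by
    rw [hμ]; module
  have S : ∀ k : ℕ, V * ζ ^ (k + 2) - ζ ^ (k + 2) * V =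
      (k + 2) • (ζ ^ (k + 1) * (V * ζ - ζ * V)) + ((k + 2) * (k + 1)) • (ζ ^ k * μ) := by
    intro k
    induction k with
    | zero =>
      have expand : V * ζ ^ 2 - ζ ^ 2 * V =
          (V * ζ - ζ * V) * ζ + ζ * (V * ζ - ζ * V) := by
        rw [sq]; noncomm_ring
      rw [expand, h2]
      simp [two_smul, two_nsmul, pow_one]
      abel
    | succ k ih =>
      have expand : V * ζ ^ (k + 1 + 2) - ζ ^ (k + 1 + 2) * V =
          (V * ζ ^ (k + 2) - ζ ^ (k + 2) * V) * ζ + ζ ^ (k + 2) * (V * ζ - ζ * V) := by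
        rw [show k + 1 + 2 = (k + 2) + 1 from rfl, pow_succ]
        noncomm_ring
      have e1 : ζ ^ (k + 1) * ((V * ζ - ζ * V) * ζ)
          = ζ ^ (k + 2) * (V * ζ - ζ * V) + ζ ^ (k + 1) * μ + ζ ^ (k + 1) * μ := by
        rw [h2, pow_succ]
        noncomm_ring
      have e2 : ζ ^ k * μ * ζ = ζ ^ (k + 1) * μ := by
        rw [mul_assoc, hcomm, pow_succ]
        noncomm_ring
      rw [expand, ih, add_mul, smul_mul_assoc, smul_mul_assoc, mul_assoc, e1, e2]
      simp only [show k + 1 + 1 = k + 2 from rfl, show k + 1 + 2 = k + 3 from rfl,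
        show k + 2 + 1 = k + 3 from rfl]
      module
  intro k
  match k with
  | 0 => simp
  | 1 => simp
  | (n + 2) =>
    have := S n
    simpa [Nat.add_sub_cancel] using this
end

section
/- Let A be an associative ℚ-algebra and V, ζ ∈ A with μ := −(1/2)[ζ,[V,ζ]] central in A. If L₂ = ∑_{k=0}^{N} S_k ζ^k is a polynomial in ζ with scalar coefficients S_k, then [V, L₂] = f'(ζ)[V,ζ] + f''(ζ) μ, where f'(ζ) = ∑_{k=1}^{N} k S_k ζ^{k−1} and f''(ζ) = ∑_{k=2}^{N} k(k−1) S_k ζ^{k−2}. -/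
/-!
Commutation with `V` is a derivation sending `ζ` to `W = [V, ζ]`, so
`[V, ζ^n] = ∑_{i<n} ζ^i W ζ^(n-1-i)`. Moving each `W` to the right past powers of `ζ` costs
`[W, ζ] = 2μ`, which commutes with `ζ`; collecting terms gives
`[V, ζ^n] = n ζ^(n-1) W + C(n,2) ζ^(n-2) (2μ)`, and the theorem follows by linearity.
-/

open Finset

theorem Finset.sum_Icc_eq_sum_range_of_eq_zero {M : Type*} [AddCommMonoid M] {f : ℕ → M}
    {m : ℕ} (hf : ∀ k < m, f k = 0) (N : ℕ) :
    ∑ k ∈ Icc m N, f k = ∑ k ∈ range (N + 1), f k := by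
  refine sum_subset (fun k hk => ?_) fun k hk hk' => hf k ?_
  · simp only [mem_Icc, mem_range] at hk ⊢; omega
  · simp only [mem_Icc, mem_range, not_and_or, not_le] at hk hk'; omega

theorem mul_pow_sub_pow_mul_eq {A : Type*} [Ring A] {V ζ W c : A}
    (hW : V * ζ - ζ * V = W) (hc : W * ζ = ζ * W + c) (hcζ : Commute c ζ) (n : ℕ) :
    V * ζ ^ n - ζ ^ n * V = n • (ζ ^ (n - 1) * W) + n.choose 2 • (ζ ^ (n - 2) * c) := by
  induction n with
  | zero => simp
  | succ n ih =>
    have leibniz : V * ζ ^ (n + 1) - ζ ^ (n + 1) * V =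
        (V * ζ ^ n - ζ ^ n * V) * ζ + ζ ^ n * W := by
      rw [← hW, pow_succ]; noncomm_ring
    rw [leibniz, ih]
    rcases n with _ | _ | n
    · simp
    · simp [hc]; noncomm_ring
    · have hWζ : ζ ^ (n + 1) * W * ζ = ζ ^ (n + 2) * W + ζ ^ (n + 1) * c := by
        rw [mul_assoc, hc, mul_add, ← mul_assoc, ← pow_succ]
      have hcζ' : ζ ^ n * c * ζ = ζ ^ (n + 1) * c := by
        rw [mul_assoc, hcζ.eq, ← mul_assoc, ← pow_succ]
      have hchoose : (n + 3).choose 2 = (n + 2).choose 2 + (n + 2) := by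
        rw [show n + 3 = n + 2 + 1 from rfl, Nat.choose_succ_succ', Nat.choose_one_right,
          add_comm]
      show ((n + 2) • (ζ ^ (n + 1) * W) + (n + 2).choose 2 • (ζ ^ n * c)) * ζ + ζ ^ (n + 2) * W =
        (n + 3) • (ζ ^ (n + 2) * W) + (n + 3).choose 2 • (ζ ^ (n + 1) * c)
      rw [add_mul, smul_mul_assoc, smul_mul_assoc, hWζ, hcζ', hchoose]
      module

/-- In an associative ℚ-algebra with `μ := −(1/2)[ζ,[V,ζ]]` central, for a
polynomial `L₂ = ∑_{k=0}^{N} S_k ζ^k` with scalar coefficients `S_k`,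
`[V, L₂] = f'(ζ)[V,ζ] + f''(ζ) μ` where `f'(ζ) = ∑_{k=1}^{N} k S_k ζ^(k−1)`
and `f''(ζ) = ∑_{k=2}^{N} k(k−1) S_k ζ^(k−2)`. -/
theorem stmt6 {A : Type*} [Ring A] [Algebra ℚ A] (V ζ μ : A) (N : ℕ) (S : ℕ → ℚ)
    (hμ : μ = -((1 : ℚ) / 2) •
      (ζ * (V * ζ - ζ * V) - (V * ζ - ζ * V) * ζ))
    (hcentral : ∀ a : A, μ * a = a * μ)
    (L₂ : A) (hL₂ : L₂ = ∑ k ∈ Finset.range (N + 1), S k • ζ ^ k) :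
    V * L₂ - L₂ * V =
      (∑ k ∈ Finset.Icc 1 N, ((k : ℚ) * S k) • ζ ^ (k - 1)) * (V * ζ - ζ * V)
        + (∑ k ∈ Finset.Icc 2 N, ((k : ℚ) * ((k : ℚ) - 1) * S k) • ζ ^ (k - 2)) * μ := by
  set W := V * ζ - ζ * V with hW
  have hc : W * ζ = ζ * W + (2 : ℚ) • μ := by rw [hμ]; module
  have hcζ : Commute ((2 : ℚ) • μ) ζ := Commute.smul_left (hcentral ζ : Commute μ ζ) _
  calc V * L₂ - L₂ * V = ∑ k ∈ range (N + 1), S k • (V * ζ ^ k - ζ ^ k * V) := by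
        simp only [hL₂, mul_sum, sum_mul, mul_smul_comm, smul_mul_assoc, smul_sub,
          sum_sub_distrib]
    _ = ∑ k ∈ range (N + 1), (((k : ℚ) * S k) • (ζ ^ (k - 1) * W)
          + ((k : ℚ) * ((k : ℚ) - 1) * S k) • (ζ ^ (k - 2) * μ)) := by
        refine sum_congr rfl fun k _ => ?_
        have hchoose : (k.choose 2 : ℚ) * 2 = k * (k - 1) := by
          rw [Nat.cast_choose_two]; ring
        rw [mul_pow_sub_pow_mul_eq hW.symm hc hcζ, ← Nat.cast_smul_eq_nsmul ℚ,
          ← Nat.cast_smul_eq_nsmul ℚ, mul_smul_comm, smul_smul, ← hchoose]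
        module
    _ = _ := by
        rw [sum_Icc_eq_sum_range_of_eq_zero (by simp),
          sum_Icc_eq_sum_range_of_eq_zero (fun k hk => by interval_cases k <;> simp),
          sum_mul, sum_mul, sum_add_distrib]
        simp only [smul_mul_assoc]
end

section
/- Let A be a unital C*-algebra and L₁, L₂, V, ζ, w₁, w₂ ∈ A with V self-adjoint, μ ∈ A central, satisfying: (i) [V, L₂] = w₁[V,ζ] + μ w₂; (ii) L₂* L₂ ≤ γ^{-2} ζ* ζ + δ₁; (iii) w₁* w₁ ≤ δ₂; (iv) w₂* w₂ ≤ δ₃, where γ > 0, δ₁, δ₂, δ₃ ≥ 0. Then for any τ₁,…,τ₅ > 0, the generator-type expression (1/2)(L₁+L₂)*[V,L₁+L₂] + (1/2)[V,L₁+L₂]*(L₁+L₂) is bounded above by L_{L₁}(V) + (τ₁²/2 + τ₂²/2) L₁* L₁ + (δ₂/(2τ₁²) + δ₂/(2τ₄²)) [V,ζ]*[V,ζ] + ((τ₃² + τ₄² + τ₅²)/(2γ²)) ζ* ζ + (1/(2τ₃²)) [V,L₁]*[V,L₁] + (δ₃/(2τ₂²) + δ₃/(2τ₅²)) μ* μ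 + ((τ₃² + τ₄² + τ₅²)/2) δ₁, where L_{L₁}(V) = (1/2)L₁*[V,L₁] + (1/2)[V,L₁]* L₁. -/
/-!
Write `B = [V, L₁]` and `C = [V, ζ]`. By the decomposition hypothesis,
`[V, L₁ + L₂] = B + w₁ C + μ w₂`, so the left-hand side is `L_{L₁}(V)` plus five symmetrised
cross terms `½ (x* y + y* x)`, pairing `L₁` with `w₁ C, μ w₂` and `L₂` with `B, w₁ C, μ w₂`.
Each is bounded by the weighted Young inequality `½ (x* y + y* x) ≤ τ²/2 x* x + 1/(2τ²) y* y`
(expand `(τ x - τ⁻¹ y)* (τ x - τ⁻¹ y) ≥ 0`), after which the hypotheses bound `L₂* L₂`,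
`(w₁ C)* (w₁ C) ≤ δ₂ C* C` and, since `μ` is central, `(μ w₂)* (μ w₂) = (w₂ μ)* (w₂ μ) ≤ δ₃ μ* μ`.
-/

theorem starModule_real_of_continuousStar {A : Type*} [AddCommGroup A] [Module ℝ A]
    [TopologicalSpace A] [ContinuousSMul ℝ A] [T2Space A] [StarAddMonoid A] [ContinuousStar A] :
    StarModule ℝ A :=
  ⟨fun r a => by simpa using map_real_smul (starAddEquiv (R := A)) continuous_star r a⟩

section

variable {A : Type*} [Ring A] [StarRing A] [PartialOrder A] [StarOrderedRing A] [Algebra ℝ A]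

theorem star_mul_mul_self_le_of_star_mul_self_le {w : A} {δ : ℝ} (hw : star w * w ≤ δ • 1)
    (c : A) : star (w * c) * (w * c) ≤ δ • (star c * c) := by
  simpa [mul_assoc, smul_mul_assoc, mul_smul_comm] using star_left_conjugate_le_conjugate hw c

theorem star_mul_add_star_mul_le [StarModule ℝ A] (x y : A) {t : ℝ} (ht : t ≠ 0) :
    star x * y + star y * x ≤ t ^ 2 • (star x * x) + (t ^ 2)⁻¹ • (star y * y) := by
  rw [← sub_nonneg]
  convert star_mul_self_nonneg (t • x - t⁻¹ • y) using 1
  simp only [star_sub, star_smul, star_trivial, sub_mul, mul_sub, smul_mul_assoc, mul_smul_comm]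
  match_scalars <;> field_simp

theorem half_star_mul_add_star_mul_le [StarModule ℝ A] {x y P Q : A} (hx : star x * x ≤ P)
    (hy : star y * y ≤ Q) {t : ℝ} (ht : t ≠ 0) :
    (1 / 2 : ℝ) • (star x * y + star y * x) ≤ (t ^ 2 / 2) • P + (1 / (2 * t ^ 2)) • Q := by
  calc (1 / 2 : ℝ) • (star x * y + star y * x)
      ≤ (1 / 2 : ℝ) • (t ^ 2 • P + (t ^ 2)⁻¹ • Q) := by
        refine smul_le_smul_of_nonneg_left ?_ (by norm_num)
        exact (star_mul_add_star_mul_le x y ht).trans (by gcongr)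
    _ = (t ^ 2 / 2) • P + (1 / (2 * t ^ 2)) • Q := by match_scalars <;> field_simp

end

-- Mathlib provides no `StarModule ℝ A` for a real normed `*`-algebra; it holds because `star`
-- is continuous and additive.
attribute [local instance] starModule_real_of_continuousStar

theorem stmt9_general {A : Type*} [NormedRing A] [StarRing A] [CStarRing A]
    [NormedAlgebra ℝ A] [PartialOrder A] [StarOrderedRing A]
    (L₁ L₂ V ζ w₁ w₂ μ : A) (γ δ₁ δ₂ δ₃ : ℝ)
    (hμcentral : ∀ a : A, μ * a = a * μ)
    (hdecomp : V * L₂ - L₂ * V = w₁ * (V * ζ - ζ * V) + μ * w₂)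
    (hL₂ : star L₂ * L₂ ≤ (γ ^ 2)⁻¹ • (star ζ * ζ) + δ₁ • (1 : A))
    (hw₁ : star w₁ * w₁ ≤ δ₂ • (1 : A))
    (hw₂ : star w₂ * w₂ ≤ δ₃ • (1 : A)) :
    ∀ τ₁ τ₂ τ₃ τ₄ τ₅ : ℝ, 0 < τ₁ → 0 < τ₂ → 0 < τ₃ → 0 < τ₄ → 0 < τ₅ →
      ((1 : ℝ) / 2) • (star (L₁ + L₂) * (V * (L₁ + L₂) - (L₁ + L₂) * V))
        + ((1 : ℝ) / 2) • (star (V * (L₁ + L₂) - (L₁ + L₂) * V) * (L₁ + L₂)) ≤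
      (((1 : ℝ) / 2) • (star L₁ * (V * L₁ - L₁ * V))
          + ((1 : ℝ) / 2) • (star (V * L₁ - L₁ * V) * L₁))
        + (τ₁ ^ 2 / 2 + τ₂ ^ 2 / 2) • (star L₁ * L₁)
        + (δ₂ / (2 * τ₁ ^ 2) + δ₂ / (2 * τ₄ ^ 2)) •
            (star (V * ζ - ζ * V) * (V * ζ - ζ * V))
        + ((τ₃ ^ 2 + τ₄ ^ 2 + τ₅ ^ 2) / (2 * γ ^ 2)) • (star ζ * ζ)
        + (1 / (2 * τ₃ ^ 2)) • (star (V * L₁ - L₁ * V) * (V * L₁ - L₁ * V))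
        + (δ₃ / (2 * τ₂ ^ 2) + δ₃ / (2 * τ₅ ^ 2)) • (star μ * μ)
        + ((τ₃ ^ 2 + τ₄ ^ 2 + τ₅ ^ 2) / 2 * δ₁) • (1 : A) := by
  intro τ₁ τ₂ τ₃ τ₄ τ₅ hτ₁ hτ₂ hτ₃ hτ₄ hτ₅
  set B := V * L₁ - L₁ * V with hB
  set C := V * ζ - ζ * V
  have hcomm : V * (L₁ + L₂) - (L₁ + L₂) * V = B + w₁ * C + μ * w₂ := by
    rw [add_assoc, ← hdecomp, hB]; noncomm_ring
  have hw₁C := star_mul_mul_self_le_of_star_mul_self_le hw₁ C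
  have hμw₂ : star (μ * w₂) * (μ * w₂) ≤ δ₃ • (star μ * μ) := by
    rw [hμcentral w₂]; exact star_mul_mul_self_le_of_star_mul_self_le hw₂ μ
  calc _ = ((1 / 2 : ℝ) • (star L₁ * B) + (1 / 2 : ℝ) • (star B * L₁))
        + (1 / 2 : ℝ) • (star L₁ * (w₁ * C) + star (w₁ * C) * L₁)
        + (1 / 2 : ℝ) • (star L₁ * (μ * w₂) + star (μ * w₂) * L₁)
        + (1 / 2 : ℝ) • (star L₂ * B + star B * L₂)
        + (1 / 2 : ℝ) • (star L₂ * (w₁ * C) + star (w₁ * C) * L₂)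
        + (1 / 2 : ℝ) • (star L₂ * (μ * w₂) + star (μ * w₂) * L₂) := by
        rw [hcomm]; simp only [star_add, add_mul, mul_add, smul_add]; abel
    _ ≤ ((1 / 2 : ℝ) • (star L₁ * B) + (1 / 2 : ℝ) • (star B * L₁))
        + ((τ₁ ^ 2 / 2) • (star L₁ * L₁) + (1 / (2 * τ₁ ^ 2)) • (δ₂ • (star C * C)))
        + ((τ₂ ^ 2 / 2) • (star L₁ * L₁) + (1 / (2 * τ₂ ^ 2)) • (δ₃ • (star μ * μ)))
        + ((τ₃ ^ 2 / 2) • ((γ ^ 2)⁻¹ • (star ζ * ζ) + δ₁ • 1)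
          + (1 / (2 * τ₃ ^ 2)) • (star B * B))
        + ((τ₄ ^ 2 / 2) • ((γ ^ 2)⁻¹ • (star ζ * ζ) + δ₁ • 1)
          + (1 / (2 * τ₄ ^ 2)) • (δ₂ • (star C * C)))
        + ((τ₅ ^ 2 / 2) • ((γ ^ 2)⁻¹ • (star ζ * ζ) + δ₁ • 1)
          + (1 / (2 * τ₅ ^ 2)) • (δ₃ • (star μ * μ))) := by
        gcongr ?_ + ?_ + ?_ + ?_ + ?_ + ?_
        exacts [le_rfl, half_star_mul_add_star_mul_le le_rfl hw₁C hτ₁.ne',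
          half_star_mul_add_star_mul_le le_rfl hμw₂ hτ₂.ne',
          half_star_mul_add_star_mul_le hL₂ le_rfl hτ₃.ne',
          half_star_mul_add_star_mul_le hL₂ hw₁C hτ₄.ne',
          half_star_mul_add_star_mul_le hL₂ hμw₂ hτ₅.ne']
    _ = _ := by match_scalars <;> ring

/-- Key estimate in the proof of Theorem 2: given the commutator
decomposition `[V, L₂] = w₁[V,ζ] + μ w₂` with `μ` central and the sector
bounds, the generator-type expression
`(1/2)(L₁+L₂)*[V,L₁+L₂] + (1/2)[V,L₁+L₂]*(L₁+L₂)` is bounded above by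
`L_{L₁}(V) + (τ₁²/2 + τ₂²/2) L₁* L₁ + (δ₂/(2τ₁²) + δ₂/(2τ₄²)) [V,ζ]*[V,ζ]
 + ((τ₃²+τ₄²+τ₅²)/(2γ²)) ζ* ζ + (1/(2τ₃²)) [V,L₁]*[V,L₁]
 + (δ₃/(2τ₂²) + δ₃/(2τ₅²)) μ* μ + ((τ₃²+τ₄²+τ₅²)/2) δ₁`. -/
theorem stmt9 {A : Type*} [NormedRing A] [StarRing A] [CStarRing A]
    [NormedAlgebra ℝ A] [PartialOrder A] [StarOrderedRing A]
    (L₁ L₂ V ζ w₁ w₂ μ : A) (γ δ₁ δ₂ δ₃ : ℝ)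
    (hV : star V = V)
    (hμcentral : ∀ a : A, μ * a = a * μ)
    (hdecomp : V * L₂ - L₂ * V = w₁ * (V * ζ - ζ * V) + μ * w₂)
    (hγ : 0 < γ) (hδ₁ : 0 ≤ δ₁) (hδ₂ : 0 ≤ δ₂) (hδ₃ : 0 ≤ δ₃)
    (hL₂ : star L₂ * L₂ ≤ (γ ^ 2)⁻¹ • (star ζ * ζ) + δ₁ • (1 : A))
    (hw₁ : star w₁ * w₁ ≤ δ₂ • (1 : A))
    (hw₂ : star w₂ * w₂ ≤ δ₃ • (1 : A)) :
    ∀ τ₁ τ₂ τ₃ τ₄ τ₅ : ℝ, 0 < τ₁ → 0 < τ₂ → 0 < τ₃ → 0 < τ₄ → 0 < τ₅ →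
      ((1 : ℝ) / 2) • (star (L₁ + L₂) * (V * (L₁ + L₂) - (L₁ + L₂) * V))
        + ((1 : ℝ) / 2) • (star (V * (L₁ + L₂) - (L₁ + L₂) * V) * (L₁ + L₂)) ≤
      (((1 : ℝ) / 2) • (star L₁ * (V * L₁ - L₁ * V))
          + ((1 : ℝ) / 2) • (star (V * L₁ - L₁ * V) * L₁))
        + (τ₁ ^ 2 / 2 + τ₂ ^ 2 / 2) • (star L₁ * L₁)
        + (δ₂ / (2 * τ₁ ^ 2) + δ₂ / (2 * τ₄ ^ 2)) •
            (star (V * ζ - ζ * V) * (V * ζ - ζ * V))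
        + ((τ₃ ^ 2 + τ₄ ^ 2 + τ₅ ^ 2) / (2 * γ ^ 2)) • (star ζ * ζ)
        + (1 / (2 * τ₃ ^ 2)) • (star (V * L₁ - L₁ * V) * (V * L₁ - L₁ * V))
        + (δ₃ / (2 * τ₂ ^ 2) + δ₃ / (2 * τ₅ ^ 2)) • (star μ * μ)
        + ((τ₃ ^ 2 + τ₄ ^ 2 + τ₅ ^ 2) / 2 * δ₁) • (1 : A) :=
  stmt9_general L₁ L₂ V ζ w₁ w₂ μ γ δ₁ δ₂ δ₃ hμcentral hdecomp hL₂ hw₁ hw₂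
end

section
/- Let A be an associative ℚ-algebra, V, ζ ∈ A with μ := −(1/2)[ζ,[V,ζ]] central. Define for a polynomial f(ζ) = ∑_{k=0}^N S_k ζ^k the set membership conditions of W₂ (sector bounds on f, f', f''). Then every L₂ = f(ζ) admits the decomposition [V, L₂] = w₁[V,ζ] − (1/2) w₂ [ζ,[V,ζ]] with w₁ = f'(ζ) and w₂ = f''(ζ). That is, membership in W₂ implies the commutator decomposition defining W₁ holds, so W₂ ⊆ W₁. -/
/-- W₂ ⊆ W₁ (Lemma 2 of the paper): for `L₂ = f(ζ) = ∑_{k=0}^{N} S_k ζ^k`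
with `μ := −(1/2)[ζ,[V,ζ]]` central, the commutator decomposition defining
W₁ holds with `w₁ = f'(ζ)` and `w₂ = f''(ζ)`:
`[V, L₂] = w₁ [V,ζ] − (1/2) w₂ [ζ,[V,ζ]]`. -/
theorem stmt15 {A : Type*} [Ring A] [Algebra ℚ A] (V ζ μ : A) (N : ℕ) (S : ℕ → ℚ)
    (hμ : μ = -((1 : ℚ) / 2) •
      (ζ * (V * ζ - ζ * V) - (V * ζ - ζ * V) * ζ))
    (hcentral : ∀ a : A, μ * a = a * μ)
    (L₂ w₁ w₂ : A)
    (hL₂ : L₂ = ∑ k ∈ Finset.range (N + 1), S k • ζ ^ k)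
    (hw₁ : w₁ = ∑ k ∈ Finset.Icc 1 N, ((k : ℚ) * S k) • ζ ^ (k - 1))
    (hw₂ : w₂ = ∑ k ∈ Finset.Icc 2 N, ((k : ℚ) * ((k : ℚ) - 1) * S k) • ζ ^ (k - 2)) :
    V * L₂ - L₂ * V =
      w₁ * (V * ζ - ζ * V)
        - ((1 : ℚ) / 2) • (w₂ * (ζ * (V * ζ - ζ * V) - (V * ζ - ζ * V) * ζ)) := by
  set C := V * ζ - ζ * V with hC
  have hCζ : C * ζ = ζ * C + (2:ℚ) • μ := by
    rw [hμ, smul_smul]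
    norm_num
  have hμζ : μ * ζ = ζ * μ := hcentral ζ
  have step : ∀ k : ℕ, V * ζ^(k+1) - ζ^(k+1) * V = (V * ζ^k - ζ^k * V) * ζ + ζ^k * C := by
    intro k
    rw [hC, pow_succ]
    noncomm_ring
  have key : ∀ k : ℕ, V * ζ^(k+2) - ζ^(k+2) * V =
      ((k:ℚ)+2) • (ζ^(k+1) * C) + (((k:ℚ)+2)*((k:ℚ)+1)) • (ζ^k * μ) := by
    intro k
    induction k with
    | zero =>
      rw [step 1]
      have h1 : V * ζ^1 - ζ^1 * V = C := by rw [pow_one, hC]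
      rw [h1, hCζ]
      norm_num
      module
    | succ m ih =>
      rw [step (m+2), ih]
      have e1 : (ζ^(m+1) * C) * ζ = ζ^(m+2) * C + (2:ℚ) • (ζ^(m+1) * μ) := by
        rw [mul_assoc, hCζ, mul_add, mul_smul_comm, ← mul_assoc, ← pow_succ]
      have e2 : (ζ^m * μ) * ζ = ζ^(m+1) * μ := by
        rw [mul_assoc, hμζ, ← mul_assoc, ← pow_succ]
      rw [add_mul, smul_mul_assoc, smul_mul_assoc, e1, e2]
      push_cast
      module
  have genk : ∀ k : ℕ, S k • (V * ζ^k - ζ^k * V) =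
      ((k:ℚ) * S k) • (ζ^(k-1) * C) + ((k:ℚ)*((k:ℚ)-1) * S k) • (ζ^(k-2) * μ) := by
    intro k
    match k with
    | 0 => simp
    | 1 =>
      have h1 : V * ζ^1 - ζ^1 * V = C := by rw [pow_one, hC]
      rw [h1]
      norm_num
    | (k+2) =>
      rw [key k, show k+2-1 = k+1 from rfl, show k+2-2 = k from rfl]
      push_cast
      module
  have hm2 : ζ * C - C * ζ = (-2:ℚ) • μ := by rw [hCζ]; module
  rw [hL₂, hw₁, hw₂, Finset.mul_sum, Finset.sum_mul, ← Finset.sum_sub_distrib]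
  have lhsum : ∀ k ∈ Finset.range (N+1), V * (S k • ζ^k) - (S k • ζ^k) * V
      = ((k:ℚ) * S k) • (ζ^(k-1) * C) + ((k:ℚ)*((k:ℚ)-1) * S k) • (ζ^(k-2) * μ) := by
    intro k _
    rw [mul_smul_comm, smul_mul_assoc, ← smul_sub, genk k]
  rw [Finset.sum_congr rfl lhsum, Finset.sum_add_distrib, hm2, mul_smul_comm, smul_smul,
    Finset.sum_mul, Finset.sum_mul]
  norm_num
  congr 1
  · refine (Finset.sum_subset (fun x hx => ?_) (fun x hx hx' => ?_)).symm
    · simp only [Finset.mem_Icc, Finset.mem_range] at *; omega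
    · simp only [Finset.mem_Icc, Finset.mem_range] at hx hx'
      have h0 : x = 0 := by omega
      subst h0; simp
  · refine (Finset.sum_subset (fun x hx => ?_) (fun x hx hx' => ?_)).symm
    · simp only [Finset.mem_Icc, Finset.mem_range] at *; omega
    · simp only [Finset.mem_Icc, Finset.mem_range] at hx hx'
      have h0 : x = 0 ∨ x = 1 := by omega
      rcases h0 with h0 | h0 <;> subst h0 <;> norm_num
end
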